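/- arXiv:2404.11112 — 8 statements merged into one kernel-verified Lean document; each statement's English description precedes it below -/
import Mathlib

section
/- Let E be a real inner product space, let φ(V) = ⟨g, V⟩ + (1/2)⟨A V, V⟩ + h(X + V) where g ∈ E, A : E → E is a positive definite self-adjoint linear operator, h : E → ℝ is convex, and X ∈ E. If V₀ minimizes φ over E, then φ(0) - φ(V₀) ≥ (1/2)⟨A V₀, V₀⟩. -/
/-!
On the segment `t ↦ t • V₀`, `φ` is a convex function `k` plus `q / 2 * t ^ 2` with
`q = ⟪A V₀, V₀⟫`, and it is minimal at `t = 1`. Comparing with the chord of `k` gives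
`(1 - t) (k 1 - k 0) ≤ (t ^ 2 - 1) q / 2` for `t < 1`; dividing by `1 - t` and letting `t → 1`
yields `k 1 - k 0 ≤ -q`, which is the claim.
-/

open RealInnerProductSpace

open Set Filter Topology

theorem ConvexOn.le_sub_of_isMinOn_add_sq {k : ℝ → ℝ} (hk : ConvexOn ℝ (Icc 0 1) k)
    {q : ℝ} (hmin : IsMinOn (fun t => k t + q / 2 * t ^ 2) (Icc 0 1) 1) : q ≤ k 0 - k 1 := by
  have hbound : ∀ t ∈ Ico (0 : ℝ) 1, k 1 - k 0 ≤ -(1 + t) * q / 2 := by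
    rintro t ⟨ht0, ht1⟩
    have hchord : k t ≤ (1 - t) * k 0 + t * k 1 := by
      simpa using hk.2 (left_mem_Icc.2 zero_le_one) (right_mem_Icc.2 zero_le_one)
        (sub_nonneg.2 ht1.le) ht0 (sub_add_cancel 1 t)
    have hle : k 1 + q / 2 * 1 ^ 2 ≤ k t + q / 2 * t ^ 2 := hmin ⟨ht0, ht1.le⟩
    have hpos : 0 < 1 - t := sub_pos.2 ht1
    nlinarith
  have hlim : Tendsto (fun t : ℝ => -(1 + t) * q / 2) (𝓝[<] 1) (𝓝 (-q)) :=
    tendsto_nhdsWithin_of_tendsto_nhds <|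
      (by fun_prop : Continuous fun t : ℝ => -(1 + t) * q / 2).tendsto' 1 _ (by ring)
  have hlimit_bound : k 1 - k 0 ≤ -q :=
    ge_of_tendsto hlim (eventually_of_mem (Ico_mem_nhdsLT zero_lt_one) hbound)
  linarith

theorem stmt_0_general {E : Type*} [NormedAddCommGroup E] [InnerProductSpace ℝ E]
    (g X : E) (A : E →ₗ[ℝ] E)
    (h : E → ℝ) (hconv : ConvexOn ℝ Set.univ h)
    (φ : E → ℝ)
    (hφ : ∀ V : E, φ V = ⟪g, V⟫ + (1/2) * ⟪A V, V⟫ + h (X + V))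
    (V₀ : E) (hmin : ∀ V : E, φ V₀ ≤ φ V) :
    φ 0 - φ V₀ ≥ (1/2) * ⟪A V₀, V₀⟫ := by
  set q := ⟪A V₀, V₀⟫
  set k : ℝ → ℝ := fun t => t * ⟪g, V₀⟫ + h (X + t • V₀)
  have hk : ConvexOn ℝ univ k :=
    ((LinearMap.id.smulRight ⟪g, V₀⟫).convexOn convex_univ).add
      ((hconv.translate_right X).comp_linearMap (LinearMap.id.smulRight V₀))
  have hφ_line : ∀ t : ℝ, φ (t • V₀) = k t + q / 2 * t ^ 2 := by
    intro t
    rw [hφ, map_smul, real_inner_smul_left, real_inner_smul_right, real_inner_smul_right]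
    ring
  have hline_min : IsMinOn (fun t => k t + q / 2 * t ^ 2) (Icc 0 1) 1 :=
    isMinOn_iff.2 fun t _ => by simpa only [← hφ_line, one_smul] using hmin (t • V₀)
  have hdrop : q ≤ k 0 - k 1 :=
    (hk.subset (subset_univ _) (convex_Icc 0 1)).le_sub_of_isMinOn_add_sq hline_min
  have h0 := hφ_line 0
  have h1 := hφ_line 1
  rw [zero_smul] at h0
  rw [one_smul] at h1
  linarith

theorem stmt_0 {E : Type*} [NormedAddCommGroup E] [InnerProductSpace ℝ E]
    (g X : E) (A : E →ₗ[ℝ] E)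
    (hA_sym : ∀ u v : E, ⟪A u, v⟫ = ⟪u, A v⟫)
    (hA_pos : ∀ v : E, v ≠ 0 → 0 < ⟪A v, v⟫)
    (h : E → ℝ) (hconv : ConvexOn ℝ Set.univ h)
    (φ : E → ℝ)
    (hφ : ∀ V : E, φ V = ⟪g, V⟫ + (1/2) * ⟪A V, V⟫ + h (X + V))
    (V₀ : E) (hmin : ∀ V : E, φ V₀ ≤ φ V) :
    φ 0 - φ V₀ ≥ (1/2) * ⟪A V₀, V₀⟫ :=
  stmt_0_general g X A h hconv φ hφ V₀ hmin
end

section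
/- Let E be a real inner product space, h : E → ℝ convex, g ∈ E, A : E → E self-adjoint positive definite, X ∈ E, and φ(V) = ⟨g, V⟩ + (1/2)⟨A V, V⟩ + h(X + V). If V₀ minimizes φ, then for every α ∈ [0,1], φ(α V₀) - φ(0) ≤ (α(α-2)/2)⟨A V₀, V₀⟩. -/
open RealInnerProductSpace

theorem stmt_1 {E : Type*} [NormedAddCommGroup E] [InnerProductSpace ℝ E]
    (g X : E) (A : E →ₗ[ℝ] E)
    (hA_sym : ∀ u v : E, ⟪A u, v⟫ = ⟪u, A v⟫)
    (hA_pos : ∀ v : E, v ≠ 0 → 0 < ⟪A v, v⟫)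
    (h : E → ℝ) (hconv : ConvexOn ℝ Set.univ h)
    (φ : E → ℝ)
    (hφ : ∀ V : E, φ V = ⟪g, V⟫ + (1/2) * ⟪A V, V⟫ + h (X + V))
    (V₀ : E) (hmin : ∀ V : E, φ V₀ ≤ φ V)
    (α : ℝ) (hα : α ∈ Set.Icc (0:ℝ) 1) :
    φ (α • V₀) - φ 0 ≤ (α * (α - 2) / 2) * ⟪A V₀, V₀⟫ := by
  obtain ⟨hα0, hα1⟩ := hα
  by_cases hV : V₀ = 0
  · subst hV
    simp [smul_zero, map_zero, inner_zero_left]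
  set Q : ℝ := ⟪A V₀, V₀⟫ with hQ
  have hQpos : 0 < Q := hA_pos V₀ hV
  set L : ℝ := ⟪g, V₀⟫ + h (X + V₀) - h X with hL
  -- key inequality at scaling t ∈ [0,1)
  have hconvpt : ∀ t : ℝ, 0 ≤ t → t ≤ 1 →
      h (X + t • V₀) ≤ t * h (X + V₀) + (1 - t) * h X := by
    intro t ht0 ht1
    have := hconv.2 (Set.mem_univ (X + V₀)) (Set.mem_univ X) ht0
      (by linarith : (0:ℝ) ≤ 1 - t) (by ring)
    have heq : t • (X + V₀) + (1 - t) • X = X + t • V₀ := by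
      simp [smul_add, sub_smul, one_smul]; abel
    rwa [heq] at this
  have hφt : ∀ t : ℝ, φ (t • V₀) = t * ⟪g, V₀⟫ + (1/2) * (t * t * Q) + h (X + t • V₀) := by
    intro t
    rw [hφ]
    have h1 : ⟪g, t • V₀⟫ = t * ⟪g, V₀⟫ := real_inner_smul_right _ _ _
    have h2 : ⟪A (t • V₀), t • V₀⟫ = t * t * Q := by
      rw [map_smul, real_inner_smul_left, real_inner_smul_right]; ring
    rw [h1, h2]
  have hkey : ∀ t : ℝ, 0 ≤ t → t < 1 → L ≤ -(1 + t) * Q / 2 := by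
    intro t ht0 ht1
    have h1 := hmin (t • V₀)
    rw [hφt t] at h1
    have h2 := hconvpt t ht0 ht1.le
    have h3 : φ V₀ = ⟪g, V₀⟫ + (1/2) * Q + h (X + V₀) := by
      rw [hφ]
    rw [h3] at h1
    have h4 : (1 - t) * L ≤ (1 - t) * (-(1 + t) * Q / 2) := by nlinarith
    have h5 : 0 < 1 - t := by linarith
    nlinarith
  have hLQ : L ≤ -Q := by
    refine le_of_forall_pos_le_add ?_
    intro ε hε
    set t : ℝ := max 0 (1 - ε / Q) with htdef
    have ht0 : 0 ≤ t := le_max_left _ _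
    have ht1 : t < 1 := by
      apply max_lt one_pos
      have : 0 < ε / Q := div_pos hε hQpos
      linarith
    have hk := hkey t ht0 ht1
    have htge : 1 - ε / Q ≤ t := le_max_right _ _
    have : -(1 + t) * Q / 2 ≤ -Q + ε := by
      have h6 : (1 - ε / Q) * Q = Q - ε := by field_simp
      nlinarith
    linarith
  -- final estimate
  have hφ0 : φ 0 = h X := by
    rw [hφ]; simp
  have hc := hconvpt α hα0 hα1
  rw [hφt α, hφ0]
  have hαL : α * L ≤ α * (-Q) := mul_le_mul_of_nonneg_left hLQ hα0
  nlinarith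
end

section
/- Let f : ℝⁿ → ℝ be differentiable with L-Lipschitz gradient, and suppose ‖∇f(x)‖ ≤ ϱ for all x in a set M. Let R : E → ℝⁿ be a map with ‖R(v) - x‖ ≤ M₁‖v‖ and ‖R(v) - x - v‖ ≤ M₂‖v‖² for a fixed x ∈ M and all v. Then for all v, f(R(v)) ≤ f(x) + ⟨∇f(x), v⟩ + (ϱM₂ + (1/2)L M₁²)‖v‖². -/
/-!
Along the segment from `x` to `y = x + d`, the slope `⟪G (x + t • d), d⟫` of `f` exceeds
`⟪G x, d⟫` by at most `L t ‖d‖²`, so `L / 2 t² ‖d‖² + t ⟪G x, d⟫ - f (x + t • d)` is monotone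
for `t ≥ 0`; comparing `t = 0` and `t = 1` gives the descent lemma
`f y ≤ f x + ⟪G x, y - x⟫ + L / 2 ‖y - x‖²`. Apply it with `y = R v`: the linear term is
`⟪G x, v⟫` up to `⟪G x, R v - x - v⟫ ≤ ϱ M₂ ‖v‖²`, and the quadratic term is at most
`L / 2 M₁² ‖v‖²`.
-/

open RealInnerProductSpace

section

variable {E : Type*} [NormedAddCommGroup E] [InnerProductSpace ℝ E] [CompleteSpace E]

theorem HasGradientAt.hasDerivAt_comp_add_smul {f : E → ℝ} {g x d : E} {t : ℝ}
    (hf : HasGradientAt f g (x + t • d)) :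
    HasDerivAt (fun s : ℝ => f (x + s • d)) ⟪g, d⟫ t := by
  have hline : HasDerivAt (fun s : ℝ => x + s • d) d t := by
    simpa using ((hasDerivAt_id t).smul_const d).const_add x
  simpa [Function.comp_def] using hf.hasFDerivAt.comp_hasDerivAt t hline

theorem le_add_inner_add_sq_of_norm_gradient_sub_le {f : E → ℝ} {G : E → E} {L : ℝ} {x : E}
    (hf : ∀ z, HasGradientAt f (G z) z) (hG : ∀ z, ‖G z - G x‖ ≤ L * ‖z - x‖) (y : E) :
    f y ≤ f x + ⟪G x, y - x⟫ + L / 2 * ‖y - x‖ ^ 2 := by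
  set d := y - x
  set φ : ℝ → ℝ := fun t => L / 2 * ‖d‖ ^ 2 * t ^ 2 + t * ⟪G x, d⟫ - f (x + t • d)
  have hφ' : ∀ t, HasDerivAt φ (L * t * ‖d‖ ^ 2 + ⟪G x, d⟫ - ⟪G (x + t • d), d⟫) t := by
    intro t
    refine ((((hasDerivAt_pow 2 t).const_mul (L / 2 * ‖d‖ ^ 2)).add
      ((hasDerivAt_id' t).mul_const ⟪G x, d⟫)).sub
      (hf (x + t • d)).hasDerivAt_comp_add_smul).congr_deriv ?_
    push_cast; ring
  have hslope : ∀ t, 0 ≤ t → ⟪G (x + t • d), d⟫ - ⟪G x, d⟫ ≤ L * t * ‖d‖ ^ 2 := by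
    intro t ht
    calc ⟪G (x + t • d), d⟫ - ⟪G x, d⟫ = ⟪G (x + t • d) - G x, d⟫ := (inner_sub_left ..).symm
      _ ≤ ‖G (x + t • d) - G x‖ * ‖d‖ := real_inner_le_norm _ _
      _ ≤ L * ‖t • d‖ * ‖d‖ := by
        gcongr; simpa using hG (x + t • d)
      _ = L * t * ‖d‖ ^ 2 := by rw [norm_smul, Real.norm_of_nonneg ht]; ring
  have hmono : MonotoneOn φ (Set.Ici 0) := by
    refine monotoneOn_of_hasDerivWithinAt_nonneg (convex_Ici 0)
      (fun t _ => (hφ' t).continuousAt.continuousWithinAt)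
      (fun t _ => (hφ' t).hasDerivWithinAt) fun t ht => ?_
    rw [interior_Ici] at ht
    linarith [hslope t (le_of_lt ht)]
  have h01 : φ 0 ≤ φ 1 := hmono Set.self_mem_Ici (Set.mem_Ici.2 zero_le_one) zero_le_one
  simp only [φ, d, zero_smul, add_zero, one_smul, add_sub_cancel] at h01
  linarith

end

theorem stmt_2 {E : Type*} [NormedAddCommGroup E] [InnerProductSpace ℝ E] [CompleteSpace E]
    (f : E → ℝ) (G : E → E) (L ϱ M₁ M₂ : ℝ)
    (hdiff : ∀ x : E, HasGradientAt f (G x) x)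
    (hLip : ∀ x y : E, ‖G x - G y‖ ≤ L * ‖x - y‖)
    (M : Set E) (hbound : ∀ x ∈ M, ‖G x‖ ≤ ϱ)
    (x : E) (hx : x ∈ M) (R : E → E)
    (hR1 : ∀ v : E, ‖R v - x‖ ≤ M₁ * ‖v‖)
    (hR2 : ∀ v : E, ‖R v - x - v‖ ≤ M₂ * ‖v‖ ^ 2) :
    ∀ v : E, f (R v) ≤ f x + ⟪G x, v⟫ + (ϱ * M₂ + (1/2) * L * M₁ ^ 2) * ‖v‖ ^ 2 := by
  intro v
  rcases eq_or_ne v 0 with rfl | hv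
  · have hR0 : R 0 = x := by simpa [sub_eq_zero] using hR1 0
    simp [hR0]
  have hL : 0 ≤ L := by
    have := (norm_nonneg _).trans (hLip v 0)
    exact nonneg_of_mul_nonneg_left this (by simpa using hv)
  have hdescent := le_add_inner_add_sq_of_norm_gradient_sub_le hdiff (fun z => hLip z x) (R v)
  have hlinear : ⟪G x, R v - x⟫ ≤ ⟪G x, v⟫ + ϱ * M₂ * ‖v‖ ^ 2 := by
    calc ⟪G x, R v - x⟫ = ⟪G x, v⟫ + ⟪G x, R v - x - v⟫ := by
          rw [← inner_add_right, add_sub_cancel]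
      _ ≤ ⟪G x, v⟫ + ‖G x‖ * ‖R v - x - v‖ := by gcongr; exact real_inner_le_norm _ _
      _ ≤ ⟪G x, v⟫ + ϱ * (M₂ * ‖v‖ ^ 2) := by
          gcongr
          · exact (norm_nonneg _).trans (hbound x hx)
          · exact hbound x hx
          · exact hR2 v
      _ = ⟪G x, v⟫ + ϱ * M₂ * ‖v‖ ^ 2 := by ring
  have hquadratic : L / 2 * ‖R v - x‖ ^ 2 ≤ 1 / 2 * L * M₁ ^ 2 * ‖v‖ ^ 2 := by
    calc L / 2 * ‖R v - x‖ ^ 2 ≤ L / 2 * (M₁ * ‖v‖) ^ 2 := by gcongr; exact hR1 v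
      _ = 1 / 2 * L * M₁ ^ 2 * ‖v‖ ^ 2 := by ring
  linarith
end

section
/- Suppose a ratio satisfies 1 - ρ ≤ (2c₂ - κ₁ - σ)α / ((2-α)(κ₁+σ)) for some α ∈ (0,1], constants c₂ > 0, κ₁ > 0, η₁ ∈ (0,1), and σ ≥ -κ₁ + 2c₂/(2-η₁). Then ρ ≥ η₁. -/
theorem stmt_5 (c₂ κ₁ η₁ σ α ρ : ℝ)
    (hc₂ : 0 < c₂) (hκ₁ : 0 < κ₁) (hη₁ : η₁ ∈ Set.Ioo (0:ℝ) 1)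
    (hσ : -κ₁ + 2 * c₂ / (2 - η₁) ≤ σ)
    (hα : α ∈ Set.Ioc (0:ℝ) 1)
    (hρ : 1 - ρ ≤ (2 * c₂ - κ₁ - σ) * α / ((2 - α) * (κ₁ + σ))) :
    η₁ ≤ ρ := by
  obtain ⟨hη0, hη1⟩ := hη₁
  obtain ⟨hα0, hα1⟩ := hα
  have h2η : (0:ℝ) < 2 - η₁ := by linarith
  have hσ' : 2 * c₂ ≤ (κ₁ + σ) * (2 - η₁) := by
    have := (div_le_iff₀ h2η).mp (by linarith : 2 * c₂ / (2 - η₁) ≤ σ + κ₁)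
    nlinarith
  have hs : 0 < κ₁ + σ := by nlinarith
  have hd : 0 < (2 - α) * (κ₁ + σ) := mul_pos (by linarith) hs
  rw [le_div_iff₀ hd] at hρ
  have h1 : (2 * c₂ - κ₁ - σ) * α ≤ (1 - η₁) * (κ₁ + σ) * α := by
    nlinarith [mul_nonneg hα0.le (sub_nonneg.2 hσ')]
  nlinarith [mul_nonneg (mul_nonneg (by linarith : (0:ℝ) ≤ 1 - η₁)
      (by linarith : (0:ℝ) ≤ 2 - α - α)) hs.le, mul_pos hd (by linarith : (0:ℝ) < 1)]
end

section
/- Let F : ℕ → ℝ and suppose for all k, F(k+1) ≤ max over j ∈ [max(0,k-m), k] of F(j), with strict sufficient decrease F(k+1) ≤ F(l(k)) - d_k where d_k ≥ 0 and l(k) is the argmax index. Then the sequence k ↦ F(l(k)) is non-increasing. -/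
theorem stmt_6 (m : ℕ) (F : ℕ → ℝ) (d : ℕ → ℝ) (hd : ∀ k, 0 ≤ d k)
    (hdec : ∀ k : ℕ,
      F (k+1) ≤ (Finset.Icc (k - m) k).sup' ⟨k, by simp [Nat.sub_le]⟩ F - d k) :
    ∀ k : ℕ,
      (Finset.Icc (k + 1 - m) (k + 1)).sup' ⟨k + 1, by simp [Nat.sub_le]⟩ F ≤
      (Finset.Icc (k - m) k).sup' ⟨k, by simp [Nat.sub_le]⟩ F := by
  intro k
  apply Finset.sup'_le
  intro j hj
  simp only [Finset.mem_Icc] at hj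
  rcases eq_or_lt_of_le hj.2 with h | h
  · subst h
    calc F (k+1) ≤ _ - d k := hdec k
      _ ≤ _ := by linarith [hd k]
  · apply Finset.le_sup'
    simp only [Finset.mem_Icc]
    exact ⟨le_trans (Nat.sub_le_sub_right (Nat.le_succ k) m) hj.1, Nat.lt_succ_iff.mp h⟩
end

section
/- Let K ∈ ℕ, m ∈ ℕ, and let (σ_k)_{k≥0} be positive reals with σ_{i+1}/σ_i ≥ γ₁ γ₂^{r(i)-1} for each i, where r(i) ≥ 1 are integers, 0 < γ₁ < 1 < γ₂, and σ_{K(m+1)} ≤ S for some S ≥ σ₀ > 0. Then ∑_{i=0}^{K(m+1)-1} r(i) ≤ K(m+1) log_{γ₂}(γ₂/γ₁) + log_{γ₂}(S/σ₀) + 1. -/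
theorem stmt_8 (K m : ℕ) (σ : ℕ → ℝ) (r : ℕ → ℕ) (γ₁ γ₂ S : ℝ)
    (hγ₁ : 0 < γ₁) (hγ₁1 : γ₁ < 1) (hγ₂ : 1 < γ₂)
    (hσpos : ∀ k, 0 < σ k) (hr : ∀ i, 1 ≤ r i)
    (hS : σ 0 ≤ S)
    (hstep : ∀ i < K * (m + 1), γ₁ * γ₂ ^ (r i - 1) * σ i ≤ σ (i + 1))
    (hend : σ (K * (m + 1)) ≤ S) :
    (∑ i ∈ Finset.range (K * (m + 1)), (r i : ℝ)) ≤
      (K * (m + 1) : ℕ) * Real.logb γ₂ (γ₂ / γ₁) + Real.logb γ₂ (S / σ 0) + 1 := by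
  set N := K * (m + 1) with hN
  have hγ₂0 : (0:ℝ) < γ₂ := lt_trans one_pos hγ₂
  -- telescoping
  have key : ∀ n ≤ N, γ₁ ^ n * γ₂ ^ (∑ i ∈ Finset.range n, (r i - 1)) * σ 0 ≤ σ n := by
    intro n hn
    induction n with
    | zero => simp
    | succ n ih =>
      have hn' : n < N := Nat.lt_of_succ_le hn
      have ih' := ih (le_of_lt hn')
      have step := hstep n hn'
      calc γ₁ ^ (n+1) * γ₂ ^ (∑ i ∈ Finset.range (n+1), (r i - 1)) * σ 0
          = γ₁ * γ₂ ^ (r n - 1) * (γ₁ ^ n * γ₂ ^ (∑ i ∈ Finset.range n, (r i - 1)) * σ 0) := by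
            rw [Finset.sum_range_succ, pow_add, pow_succ]; ring
        _ ≤ γ₁ * γ₂ ^ (r n - 1) * σ n := by
            apply mul_le_mul_of_nonneg_left ih'
            positivity
        _ ≤ σ (n+1) := step
  set T := ∑ i ∈ Finset.range N, (r i - 1) with hT
  have hmain : γ₁ ^ N * γ₂ ^ T * σ 0 ≤ S := le_trans (key N le_rfl) hend
  have hσ0 : 0 < σ 0 := hσpos 0
  have hSpos : 0 < S := lt_of_lt_of_le hσ0 hS
  have hγ₂T : (γ₂ : ℝ) ^ T ≤ S / (γ₁ ^ N * σ 0) := by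
    rw [le_div_iff₀ (by positivity)]
    nlinarith [hmain]
  have hlog : (T : ℝ) ≤ Real.logb γ₂ (S / σ 0) - N * Real.logb γ₂ γ₁ := by
    have h1 : Real.logb γ₂ (γ₂ ^ T) ≤ Real.logb γ₂ (S / (γ₁ ^ N * σ 0)) :=
      Real.logb_le_logb_of_le hγ₂ (by positivity) hγ₂T
    rw [Real.logb_pow, Real.logb_self_eq_one hγ₂] at h1
    have h2 : Real.logb γ₂ (S / (γ₁ ^ N * σ 0)) =
        Real.logb γ₂ (S / σ 0) - N * Real.logb γ₂ γ₁ := by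
      rw [Real.logb_div (ne_of_gt hSpos) (by positivity),
          Real.logb_div (ne_of_gt hSpos) (ne_of_gt hσ0),
          Real.logb_mul (by positivity) (ne_of_gt hσ0), Real.logb_pow]
      ring
    rw [h2] at h1; linarith [h1]
  have hsum : (∑ i ∈ Finset.range N, (r i : ℝ)) = (T : ℝ) + N := by
    have : (T : ℝ) = ∑ i ∈ Finset.range N, ((r i : ℝ) - 1) := by
      rw [hT, Nat.cast_sum]
      apply Finset.sum_congr rfl
      intro i _
      rw [Nat.cast_sub (hr i), Nat.cast_one]
    rw [this, Finset.sum_sub_distrib]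
    simp
  have hratio : Real.logb γ₂ (γ₂ / γ₁) = 1 - Real.logb γ₂ γ₁ := by
    rw [Real.logb_div (ne_of_gt hγ₂0) (ne_of_gt hγ₁),
        Real.logb_self_eq_one hγ₂]
  rw [hsum, hratio]
  push_cast
  nlinarith [hlog]
end

section
/- Let E be a real inner product space, h : E → ℝ convex and L_h-Lipschitz, R : E → E a map satisfying ‖R(ξ) - R(η) - DR(η)[ξ-η]‖ ≤ M₂‖ξ-η‖² for all ξ, η (where DR(η) is the derivative of R at η). Let H : E → E be self-adjoint with λ_min(H) ≥ 4 L_h M₂, g ∈ E, and φ(V) = ⟨g,V⟩ + (1/2)⟨H V, V⟩ + h(R(V)). If Ṽ is a minimizer of φ satisfying the first-order condition g + H[Ṽ] + DR(Ṽ)*[ξ] = 0 for some ξ ∈ ∂h(R(Ṽ)), then for every W ≠ Ṽ, φ(W) - φ(Ṽ) ≥ L_h M₂ ‖W - Ṽ‖² > 0; in particular the minimizer of φ is unique. -/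
open RealInnerProductSpace

theorem stmt_10 {E : Type*} [NormedAddCommGroup E] [InnerProductSpace ℝ E]
    (h : E → ℝ) (Lh M₂ : ℝ) (hLh : 0 < Lh) (hM₂ : 0 < M₂)
    (hconv : ConvexOn ℝ Set.univ h)
    (hLip : ∀ a b : E, |h a - h b| ≤ Lh * ‖a - b‖)
    (R : E → E) (DR : E → E →L[ℝ] E)
    (hdiff : ∀ x : E, HasFDerivAt R (DR x) x)
    (hR : ∀ ξ η : E, ‖R ξ - R η - DR η (ξ - η)‖ ≤ M₂ * ‖ξ - η‖ ^ 2)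
    (H : E →ₗ[ℝ] E) (hH_sym : ∀ u v : E, ⟪H u, v⟫ = ⟪u, H v⟫)
    (hH : ∀ v : E, 4 * Lh * M₂ * ‖v‖ ^ 2 ≤ ⟪H v, v⟫)
    (g : E) (φ : E → ℝ)
    (hφ : ∀ V : E, φ V = ⟪g, V⟫ + (1/2) * ⟪H V, V⟫ + h (R V))
    (Vt : E) (hmin : ∀ V : E, φ Vt ≤ φ V) (ξ : E)
    (hξ_sub : ∀ y : E, h (R Vt) + ⟪ξ, y - R Vt⟫ ≤ h y)
    (hstat : ∀ w : E, ⟪g, w⟫ + ⟪H Vt, w⟫ + ⟪ξ, DR Vt w⟫ = 0) :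
    ∀ W : E, W ≠ Vt → Lh * M₂ * ‖W - Vt‖ ^ 2 ≤ φ W - φ Vt ∧ 0 < φ W - φ Vt := by
  -- First, bound ‖ξ‖ ≤ Lh
  have hξnorm : ‖ξ‖ ≤ Lh := by
    have h1 := hξ_sub (R Vt + ξ)
    simp only [add_sub_cancel_left] at h1
    have h2 : ⟪ξ, ξ⟫ ≤ h (R Vt + ξ) - h (R Vt) := by linarith
    have h3 : h (R Vt + ξ) - h (R Vt) ≤ Lh * ‖ξ‖ := by
      have := hLip (R Vt + ξ) (R Vt)
      have habs : h (R Vt + ξ) - h (R Vt) ≤ |h (R Vt + ξ) - h (R Vt)| := le_abs_self _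
      simp only [add_sub_cancel_left] at this
      linarith
    have h4 : ‖ξ‖ ^ 2 ≤ Lh * ‖ξ‖ := by
      rw [← real_inner_self_eq_norm_sq]; linarith
    rcases eq_or_lt_of_le (norm_nonneg ξ) with hz | hz
    · rw [← hz]; exact hLh.le
    · nlinarith
  intro W hW
  set w : E := W - Vt with hwdef
  have hwne : w ≠ 0 := sub_ne_zero.mpr hW
  have hwpos : 0 < ‖w‖ := norm_pos_iff.mpr hwne
  have hWeq : W = Vt + w := by rw [hwdef]; abel
  -- expansion of quadratic form
  have hexp : ⟪H W, W⟫ = ⟪H Vt, Vt⟫ + 2 * ⟪H Vt, w⟫ + ⟪H w, w⟫ := by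
    rw [hWeq, map_add, inner_add_left, inner_add_right, inner_add_right]
    have : ⟪H w, Vt⟫ = ⟪H Vt, w⟫ := by
      rw [hH_sym w Vt, real_inner_comm]
    rw [this]; ring
  -- subgradient inequality at R W
  have hsub := hξ_sub (R W)
  -- stationarity at w
  have hst := hstat w
  -- bound the remainder term
  have hrem : ‖R W - R Vt - DR Vt w‖ ≤ M₂ * ‖w‖ ^ 2 := by
    have := hR W Vt
    rwa [← hwdef] at this
  have hip : ⟪ξ, R W - R Vt - DR Vt w⟫ ≥ -(Lh * M₂ * ‖w‖ ^ 2) := by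
    have h1 : |⟪ξ, R W - R Vt - DR Vt w⟫| ≤ ‖ξ‖ * ‖R W - R Vt - DR Vt w‖ :=
      abs_real_inner_le_norm _ _
    have h2 : ‖ξ‖ * ‖R W - R Vt - DR Vt w‖ ≤ Lh * (M₂ * ‖w‖ ^ 2) :=
      mul_le_mul hξnorm hrem (norm_nonneg _) hLh.le
    have h3 := neg_abs_le ⟪ξ, R W - R Vt - DR Vt w⟫
    nlinarith
  have hgw : ⟪g, W⟫ = ⟪g, Vt⟫ + ⟪g, w⟫ := by
    rw [hWeq, inner_add_right]
  have hsplit : ⟪ξ, R W - R Vt⟫ = ⟪ξ, R W - R Vt - DR Vt w⟫ + ⟪ξ, DR Vt w⟫ := by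
    rw [← inner_add_right]; congr 1; abel
  have hsub2 : h (R Vt) + ⟪ξ, R W - R Vt⟫ ≤ h (R W) := hsub
  have hHw := hH w
  have key : Lh * M₂ * ‖w‖ ^ 2 ≤ φ W - φ Vt := by
    rw [hφ W, hφ Vt, hgw, hexp]
    nlinarith [hsub2, hsplit, hip, hHw, hst]
  refine ⟨key, ?_⟩
  have : 0 < Lh * M₂ * ‖w‖ ^ 2 := by positivity
  linarith
end

section
/- Suppose real numbers satisfy 1 - ρ ≤ (4c₁ - σ - 2κ₃)α / ((2L_hM₂ + σ)(2-α)) with α ∈ (0,1], κ₃ = 3L_hM₂, L_hM₂ > 0, c₁ > 0, η₁ ∈ (0,1), and σ ≥ (4c₁ - 2κ₃ - 2(1-η₁)L_hM₂)/(2-η₁). Then ρ ≥ η₁. -/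
theorem stmt_13 (c₁ Lh M₂ κ₃ η₁ σ α ρ : ℝ)
    (hc₁ : 0 < c₁) (hLh : 0 < Lh) (hM₂ : 0 < M₂)
    (hκ₃ : κ₃ = 3 * Lh * M₂)
    (hη₁ : η₁ ∈ Set.Ioo (0:ℝ) 1) (hσpos : 0 < σ)
    (hσ : (4 * c₁ - 2 * κ₃ - 2 * (1 - η₁) * Lh * M₂) / (2 - η₁) ≤ σ)
    (hα : α ∈ Set.Ioc (0:ℝ) 1)
    (hρ : 1 - ρ ≤ (4 * c₁ - σ - 2 * κ₃) * α / ((2 * Lh * M₂ + σ) * (2 - α))) :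
    η₁ ≤ ρ := by
  obtain ⟨hη0, hη1⟩ := hη₁
  obtain ⟨hα0, hα1⟩ := hα
  have hD : 0 < (2 * Lh * M₂ + σ) * (2 - α) := by
    have : 0 < 2 * Lh * M₂ + σ := by positivity
    nlinarith
  have h2η : 0 < 2 - η₁ := by linarith
  have hσ' : 4 * c₁ - 2 * κ₃ - 2 * (1 - η₁) * Lh * M₂ ≤ σ * (2 - η₁) :=
    (div_le_iff₀ h2η).mp hσ
  have key : 4 * c₁ - σ - 2 * κ₃ ≤ (1 - η₁) * (2 * Lh * M₂ + σ) := by nlinarith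
  have h2 : (4 * c₁ - σ - 2 * κ₃) * α / ((2 * Lh * M₂ + σ) * (2 - α)) ≤ 1 - η₁ := by
    rw [div_le_iff₀ hD]
    have h3 : 0 ≤ (1 - η₁) * (2 * Lh * M₂ + σ) := by nlinarith
    nlinarith [mul_le_mul_of_nonneg_right key hα0.le]
  linarith
end
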